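/- Suppose the parameters (C_{x,j,i}), x ∈ ℐ, satisfy the one-sidedness condition and energy consistency, and are extended to all of ℒ by C_{x,j} := 1 for x ∈ 𝒜 and C_{x,j} := 2/3 for x ∈ 𝒞 (compatibly with one-sidedness and energy consistency). Then for every V ∈ 𝒱, every F ∈ ℝ^{2×2}, and every u ∈ 𝒰₀, ⟨δE_ac(y_F), u⟩ = Σ_{x∈ℒ} [ Σ_{j=1}^6 Σ_{i=1}^6 (C_{x−a_i,j,i} − C_{x,j,i}) ∂_j V(F𝐚) ] · u(x); that is, the negative force on the atom at x ∈ ℒ under the homogeneous deformation y_F equals −f_ac(x; y_F) = Σ_{j=1}^6 Σ_{i=1}^6 (C_{x−a_i,j,i} − C_{x,j,i}) ∂_j V(F𝐚). -/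

import Mathlib

open Real
open scoped BigOperators Classical ENNReal

noncomputable section

namespace AC

/-- The plane `ℝ²` with the Euclidean norm. -/
abbrev E2 := EuclideanSpace ℝ (Fin 2)

/-- `2 × 2` real matrices. -/
abbrev Mat2 := Matrix (Fin 2) (Fin 2) ℝ

def toE2 (v : Fin 2 → ℝ) : E2 := WithLp.toLp 2 v

/-- The lattice directions `a_j = Q6^(j-1) a_1`, `Q6` the rotation by `π/3`. -/
def avec (j : ℤ) : E2 :=
  toE2 ![Real.cos (((j : ℝ) - 1) * (Real.pi / 3)), Real.sin (((j : ℝ) - 1) * (Real.pi / 3))]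

/-- The volume `Ω₀ = √3/2` of a primitive cell. -/
def Om0 : ℝ := Real.sqrt 3 / 2

/-- `𝐚 = (a_1, …, a_6)`. -/
def aFam : Fin 6 → E2 := fun j => avec ((j : ℕ) + 1)

/-- Matrix-vector multiplication on `E2`. -/
def mvec (F : Mat2) (v : E2) : E2 := toE2 fun i => ∑ k, F i k * v k

/-- `F𝐚 = (F a_1, …, F a_6)`. -/
def Famat (F : Mat2) : Fin 6 → E2 := fun j => mvec F (aFam j)

/-- Lattice coordinates (w.r.t. the basis `a_1, a_2`) of `a_j` (indices mod 6). -/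
def ed (j : ℤ) : ℤ × ℤ :=
  match (j % 6).toNat with
  | 1 => (1, 0)
  | 2 => (0, 1)
  | 3 => (-1, 1)
  | 4 => (-1, 0)
  | 5 => (0, -1)
  | _ => (1, -1)

/-- The lattice point `n₁ a₁ + n₂ a₂`; `ℒ = emb '' (ℤ × ℤ)`. -/
def emb (n : ℤ × ℤ) : E2 := (n.1 : ℝ) • avec 1 + (n.2 : ℝ) • avec 2

/-- Forward finite difference `D_j v(x) = v(x + a_j) - v(x)` in lattice coordinates. -/
def Dd (j : ℤ) (v : ℤ × ℤ → E2) (n : ℤ × ℤ) : E2 := v (n + ed j) - v n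

/-- `Dv(x) = (D_1 v(x), …, D_6 v(x))`. -/
def Dfam (y : ℤ × ℤ → E2) (n : ℤ × ℤ) : Fin 6 → E2 := fun j => Dd ((j : ℕ) + 1) y n

/-- Euclidean dot product. -/
def dotE (v w : E2) : ℝ := ∑ i, v i * w i

/-- Frobenius inner product `A : B`. -/
def frobI (A B : Mat2) : ℝ := ∑ i, ∑ k, A i k * B i k

/-- Frobenius norm. -/
def frobN (A : Mat2) : ℝ := Real.sqrt (∑ i, ∑ k, (A i k) ^ 2)

/-- Outer product `v ⊗ w`. -/
def outer (v w : E2) : Mat2 := fun i k => v i * w k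

/-- The element of `(ℝ²)⁶` with `k`-th standard basis vector in slot `j` and `0` elsewhere. -/
def unitv (j : Fin 6) (k : Fin 2) : Fin 6 → E2 := fun i => if i = j then toE2 (Pi.single k 1) else 0

/-- Partial gradient `∂_j V(g) ∈ ℝ²` of `V` with respect to its `j`-th argument. -/
def pd (V : (Fin 6 → E2) → ℝ) (j : Fin 6) (g : Fin 6 → E2) : E2 :=
  toE2 fun k => deriv (fun t : ℝ => V (g + t • unitv j k)) 0

/-- Second partial derivative `∂_{ij} V(g) ∈ ℝ^{2×2}`. -/
def pd2 (V : (Fin 6 → E2) → ℝ) (i j : Fin 6) (g : Fin 6 → E2) : Mat2 :=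
  fun k l => deriv (fun t : ℝ => pd V j (g + t • unitv i k) l) 0

/-- Third partial derivative `∂_{ijk} V(g)`. -/
def pd3 (V : (Fin 6 → E2) → ℝ) (i j k : Fin 6) (g : Fin 6 → E2) : Fin 2 → Fin 2 → Fin 2 → ℝ :=
  fun p q r => deriv (fun t : ℝ => pd2 V j k (g + t • unitv i p) q r) 0

/-- Operator norm of a matrix viewed as a bilinear form on `ℝ²`. -/
def matOpNorm (A : Mat2) : ℝ :=
  sSup {r : ℝ | ∃ h1 h2 : E2, ‖h1‖ = 1 ∧ ‖h2‖ = 1 ∧ r = ∑ k, ∑ l, A k l * h1 k * h2 l}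

/-- Norm of a trilinear form on `ℝ²`. -/
def t3norm (B : Fin 2 → Fin 2 → Fin 2 → ℝ) : ℝ :=
  sSup {r : ℝ | ∃ h1 h2 h3 : E2, ‖h1‖ = 1 ∧ ‖h2‖ = 1 ∧ ‖h3‖ = 1 ∧
    r = ∑ p, ∑ q, ∑ s, B p q s * h1 p * h2 q * h3 s}

/-- `M₂ = Σ_{i,j} sup_g ‖∂_{ij}V(g)‖`. -/
def M2 (V : (Fin 6 → E2) → ℝ) : ℝ :=
  ∑ i : Fin 6, ∑ j : Fin 6, ⨆ g : Fin 6 → E2, matOpNorm (pd2 V i j g)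

/-- `M₃ = Σ_{i,j,k} sup_g ‖∂_{ijk}V(g)‖`. -/
def M3 (V : (Fin 6 → E2) → ℝ) : ℝ :=
  ∑ i : Fin 6, ∑ j : Fin 6, ∑ k : Fin 6, ⨆ g : Fin 6 → E2, t3norm (pd3 V i j k g)

/-- Finiteness of `M₂`. -/
def M2fin (V : (Fin 6 → E2) → ℝ) : Prop :=
  ∀ i j : Fin 6, BddAbove (Set.range fun g : Fin 6 → E2 => matOpNorm (pd2 V i j g))

/-- Finiteness of `M₃`. -/
def M3fin (V : (Fin 6 → E2) → ℝ) : Prop :=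
  ∀ i j k : Fin 6, BddAbove (Set.range fun g : Fin 6 → E2 => t3norm (pd3 V i j k g))

/-- The class `𝒱`: `C³` potentials with the point symmetry `V((-g_{j+3})_j) = V(g)`. -/
def memV (V : (Fin 6 → E2) → ℝ) : Prop :=
  ContDiff ℝ 3 V ∧ ∀ g : Fin 6 → E2, V (fun j => -g (j + 3)) = V g

/-- Cauchy–Born stored energy `W(F) = V(F𝐚)/Ω₀`. -/
def Wf (V : (Fin 6 → E2) → ℝ) (F : Mat2) : ℝ := V (Famat F) / Om0

/-- `∂W(F) ∈ ℝ^{2×2}`. -/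
def DW (V : (Fin 6 → E2) → ℝ) (F : Mat2) : Mat2 :=
  fun i k => deriv (fun t : ℝ => Wf V (F + t • Matrix.single i k 1)) 0

/-- The matrix `G` with `G b₁ = v₁`, `G b₂ = v₂` (for linearly independent `b₁, b₂`). -/
def solve2 (b1 b2 v1 v2 : E2) : Mat2 := fun i k =>
  (if k = 0 then v1 i * b2 1 - v2 i * b1 1 else v2 i * b1 0 - v1 i * b2 0) /
    (b1 0 * b2 1 - b1 1 * b2 0)

/-- Triangles of the canonical triangulation `𝒯`: `(n, true)` is the upward triangle
with vertices `n, n+a₁, n+a₂`, and `(n, false)` the downward triangle with vertices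
`n, n+a₁, n+a₆` (in lattice coordinates). -/
abbrev Tri := (ℤ × ℤ) × Bool

/-- The gradient `∂_T y` of the piecewise affine interpolant of `y` on `T`. -/
def triGrad (y : ℤ × ℤ → E2) (T : Tri) : Mat2 :=
  if T.2 then solve2 (avec 1) (avec 2) (Dd 1 y T.1) (Dd 2 y T.1)
  else solve2 (avec 1) (avec 6) (Dd 1 y T.1) (Dd 6 y T.1)

/-- The vertices `T ∩ ℒ` of a triangle, in lattice coordinates. -/
def triVerts (T : Tri) : Finset (ℤ × ℤ) :=
  if T.2 then {T.1, T.1 + (1, 0), T.1 + (0, 1)} else {T.1, T.1 + (1, 0), T.1 + (1, -1)}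

/-- `x_{T,j}`: the unique lattice point with `x_{T,j}, x_{T,j} + a_{j+1} ∈ T`
(here `j : Fin 6` labels the direction `a_{j+1}`). -/
def xT (T : Tri) (j : Fin 6) : ℤ × ℤ :=
  T.1 + (if T.2 then
    (match (j : ℕ) with
     | 0 => ((0 : ℤ), (0 : ℤ)) | 1 => (0, 0) | 2 => (1, 0) | 3 => (1, 0) | 4 => (0, 1) | _ => (0, 1))
  else
    (match (j : ℕ) with
     | 0 => ((0 : ℤ), (0 : ℤ)) | 1 => (1, -1) | 2 => (1, -1) | 3 => (1, 0) | 4 => (1, 0) | _ => (0, 0)))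

/-- The neighbouring triangle `T_j` of `T` sharing the edge with direction `a_{j+1}`. -/
def nbr (T : Tri) (j : Fin 6) : Tri :=
  if T.2 then
    (T.1 + (match (j : ℕ) % 3 with | 0 => ((0 : ℤ), (0 : ℤ)) | 1 => (-1, 1) | _ => (0, 1)), false)
  else
    (T.1 + (match (j : ℕ) % 3 with | 0 => ((0 : ℤ), (0 : ℤ)) | 1 => (1, -1) | _ => (0, -1)), true)

/-- The triangle `T_{x,j} = conv{x, x + a_j, x + a_{j+1}}` (index `j` mod 6). -/
def Txj (x : ℤ × ℤ) (j : ℤ) : Tri :=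
  match (j % 6).toNat with
  | 1 => (x, true)
  | 2 => (x + (-1, 1), false)
  | 3 => (x + (-1, 0), true)
  | 4 => (x + (-1, 0), false)
  | 5 => (x + (0, -1), true)
  | _ => (x, false)

/-- The Cauchy–Born site potential `V^c(g) = (Ω₀/6) Σ_j W(∂_{T_{x,j}} y)` as a function
of the six differences `g = Dy(x)`. -/
def Vc (V : (Fin 6 → E2) → ℝ) (g : Fin 6 → E2) : ℝ :=
  Om0 / 6 * ∑ j : Fin 6, Wf V (solve2 (avec ((j : ℕ) + 1)) (avec ((j : ℕ) + 2)) (g j) (g (j + 1)))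

/-- The atomistic stress `Σa(y;T)`. -/
def Sa (V : (Fin 6 → E2) → ℝ) (y : ℤ × ℤ → E2) (T : Tri) : Mat2 :=
  Om0⁻¹ • ∑ j : Fin 6, outer (pd V j (Dfam y (xT T j))) (aFam j)

/-- The continuum stress `Σc¹(y;T) = ∂W(∂_T y)`. -/
def Sc1 (V : (Fin 6 → E2) → ℝ) (y : ℤ × ℤ → E2) (T : Tri) : Mat2 := DW V (triGrad y T)

/-- The continuum stress `Σc²(y;T)`. -/
def Sc2 (V : (Fin 6 → E2) → ℝ) (y : ℤ × ℤ → E2) (T : Tri) : Mat2 :=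
  Om0⁻¹ • ∑ j : Fin 6, (2 : ℝ)⁻¹ •
    outer (pd V j (Famat (triGrad y T)) + pd V j (Famat (triGrad y (nbr T j)))) (aFam j)

/-- The continuum stress `Σc³(y;T)`. -/
def Sc3 (V : (Fin 6 → E2) → ℝ) (y : ℤ × ℤ → E2) (T : Tri) : Mat2 :=
  Om0⁻¹ • ∑ j : Fin 6, outer (pd (Vc V) j (Dfam y (xT T j))) (aFam j)

/-- The interface region `ℐ` determined by the atomistic region `𝒜`. -/
def interf (A : Set (ℤ × ℤ)) : Set (ℤ × ℤ) :=
  {x | x ∉ A ∧ ∃ j : Fin 6, x + ed ((j : ℕ) + 1) ∈ A}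

/-- The continuum region `𝒞 = ℒ ∖ (𝒜 ∪ ℐ)`. -/
def contR (A : Set (ℤ × ℤ)) : Set (ℤ × ℤ) := {x | x ∉ A ∧ x ∉ interf A}

/-- The reconstructed interface potential `V^i(g) = V((Σ_i C_{j,i} g_i)_j)`. -/
def Vi (V : (Fin 6 → E2) → ℝ) (Cp : Fin 6 → Fin 6 → ℝ) (g : Fin 6 → E2) : ℝ :=
  V fun j => ∑ i : Fin 6, Cp j i • g i

/-- The hybrid site potential `V^ac_x`. -/
def Vac (V : (Fin 6 → E2) → ℝ) (C : ℤ × ℤ → Fin 6 → Fin 6 → ℝ) (A : Set (ℤ × ℤ))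
    (x : ℤ × ℤ) : (Fin 6 → E2) → ℝ :=
  if x ∈ A then V else if x ∈ interf A then Vi V (C x) else Vc V

/-- First variation `⟨δE_a(y), u⟩` of the atomistic energy. -/
def dEa (V : (Fin 6 → E2) → ℝ) (y u : ℤ × ℤ → E2) : ℝ :=
  ∑ᶠ n : ℤ × ℤ, ∑ j : Fin 6, dotE (pd V j (Dfam y n)) (Dfam u n j)

/-- First variation `⟨δE_c(y), u⟩` of the Cauchy–Born energy. -/
def dEc (V : (Fin 6 → E2) → ℝ) (y u : ℤ × ℤ → E2) : ℝ :=
  ∑ᶠ T : Tri, Om0 / 2 * frobI (DW V (triGrad y T)) (triGrad u T)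

/-- First variation `⟨δE_ac(y), u⟩` of the a/c coupling energy. -/
def dEac (V : (Fin 6 → E2) → ℝ) (C : ℤ × ℤ → Fin 6 → Fin 6 → ℝ) (A : Set (ℤ × ℤ))
    (y u : ℤ × ℤ → E2) : ℝ :=
  ∑ᶠ n : ℤ × ℤ, ∑ i : Fin 6, dotE (pd (Vac V C A n) i (Dfam y n)) (Dfam u n i)

/-- The a/c stress `Σac(y;T)`. -/
def Sac (V : (Fin 6 → E2) → ℝ) (C : ℤ × ℤ → Fin 6 → Fin 6 → ℝ) (A : Set (ℤ × ℤ))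
    (y : ℤ × ℤ → E2) (T : Tri) : Mat2 :=
  Om0⁻¹ • ∑ j : Fin 6, outer (pd (Vac V C A (xT T j)) j (Dfam y (xT T j))) (aFam j)

/-- `u ∈ 𝒰₀`: finitely supported displacement. -/
def FinSupp (u : ℤ × ℤ → E2) : Prop := (Function.support u).Finite

/-- `y ∈ 𝒴₀`: deformation with `y - id` finitely supported. -/
def inY0 (y : ℤ × ℤ → E2) : Prop := (Function.support fun n => y n - emb n).Finite

/-- The homogeneous deformation `y_F(x) = Fx`. -/
def yhom (F : Mat2) : ℤ × ℤ → E2 := fun n => mvec F (emb n)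

/-- One-sidedness: `C_{j,i} = 0` unless `i ∈ {j-1, j, j+1}` (mod 6). -/
def oneSided (Cp : Fin 6 → Fin 6 → ℝ) : Prop :=
  ∀ j i : Fin 6, i ≠ j - 1 → i ≠ j → i ≠ j + 1 → Cp j i = 0

/-- Local energy consistency: `C_{j,j-1} = C_{j,j+1} = 1 - C_{j,j}`. -/
def eCons (Cp : Fin 6 → Fin 6 → ℝ) : Prop :=
  ∀ j : Fin 6, Cp j (j - 1) = 1 - Cp j j ∧ Cp j (j + 1) = 1 - Cp j j

/-- The coefficients corresponding to the atomistic site potential (`C_{x,j} = 1`). -/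
def atomC : Fin 6 → Fin 6 → ℝ := fun j i => if i = j then 1 else 0

/-- The coefficients corresponding to the Cauchy–Born site potential (`C_{x,j} = 2/3`). -/
def cbC : Fin 6 → Fin 6 → ℝ := fun j i =>
  if i = j then 2 / 3 else if i = j - 1 ∨ i = j + 1 then 1 / 3 else 0

/-- The negative force `-f_ac(x; y_F) = Σ_{j,i} (C_{x-a_i,j,i} - C_{x,j,i}) ∂_j V(F𝐚)`. -/
def forceSum (C : ℤ × ℤ → Fin 6 → Fin 6 → ℝ) (V : (Fin 6 → E2) → ℝ) (F : Mat2)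
    (x : ℤ × ℤ) : E2 :=
  ∑ j : Fin 6, ∑ i : Fin 6, (C (x - ed ((i : ℕ) + 1)) j i - C x j i) • pd V j (Famat F)

/-- The force consistency condition (5.2) on the coefficients. -/
def fCons (C : ℤ × ℤ → Fin 6 → Fin 6 → ℝ) : Prop :=
  ∀ j : Fin 6, (j : ℕ) < 3 → ∀ x : ℤ × ℤ,
    ∑ i : Fin 6, (C (x - ed ((i : ℕ) + 1)) j i - C (x - ed ((i : ℕ) + 1)) (j + 3) i
      - C x j i + C x (j + 3) i) = 0

/-- `|D²y(x)| = max_{i,j} |D_i D_j y(x)|`. -/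
def D2n (y : ℤ × ℤ → E2) (n : ℤ × ℤ) : ℝ :=
  ⨆ i : Fin 6, ⨆ j : Fin 6, ‖Dd ((i : ℕ) + 1) (Dd ((j : ℕ) + 1) y) n‖

/-- `|D³y(x)| = max_{i,j,k} |D_i D_j D_k y(x)|`. -/
def D3n (y : ℤ × ℤ → E2) (n : ℤ × ℤ) : ℝ :=
  ⨆ i : Fin 6, ⨆ j : Fin 6, ⨆ k : Fin 6,
    ‖Dd ((i : ℕ) + 1) (Dd ((j : ℕ) + 1) (Dd ((k : ℕ) + 1) y)) n‖

/-- `ℓ^p` norm of a lattice function over a subset `S ⊆ ℒ`. -/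
def lpNormS (p : ℝ≥0∞) (f : ℤ × ℤ → ℝ) (S : Set (ℤ × ℤ)) : ℝ :=
  if p = ⊤ then ⨆ x : S, |f x| else (∑ᶠ x ∈ S, |f x| ^ p.toReal) ^ (1 / p.toReal)

/-- `‖∂u‖_{L^q}` for the piecewise affine interpolant. -/
def gradLp (q : ℝ≥0∞) (u : ℤ × ℤ → E2) : ℝ :=
  if q = ⊤ then ⨆ T : Tri, frobN (triGrad u T)
  else (∑ᶠ T : Tri, Om0 / 2 * frobN (triGrad u T) ^ q.toReal) ^ (1 / q.toReal)

/-- `𝒯_𝒜`: triangles with `T ∩ (ℐ ∪ 𝒞) = ∅`. -/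
def TA (A : Set (ℤ × ℤ)) : Set Tri := {T | ∀ n ∈ triVerts T, n ∉ interf A ∧ n ∉ contR A}

/-- `𝒯_𝒞`: triangles with `T ∩ (ℐ ∪ 𝒜) = ∅`. -/
def TC (A : Set (ℤ × ℤ)) : Set Tri := {T | ∀ n ∈ triVerts T, n ∉ interf A ∧ n ∉ A}

/-- `𝒯_ℐ = 𝒯 ∖ (𝒯_𝒜 ∪ 𝒯_𝒞)`. -/
def TI (A : Set (ℤ × ℤ)) : Set Tri := {T | T ∉ TA A ∧ T ∉ TC A}

/-- The midpoint of the edge `(x, x + a_j)`. -/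
def edgeMid (x : ℤ × ℤ) (j : ℤ) : E2 := emb x + (2 : ℝ)⁻¹ • avec j

/-- The edge `(x, x+a_j)` belongs to `𝔉_𝒜` (it lies in a triangle of `𝒯_𝒜`). -/
def edgeInA (A : Set (ℤ × ℤ)) (x : ℤ × ℤ) (j : ℤ) : Prop :=
  Txj x j ∈ TA A ∨ Txj x (j - 1) ∈ TA A

/-- The edge `(x, x+a_j)` belongs to `𝔉_𝒞`. -/
def edgeInC (A : Set (ℤ × ℤ)) (x : ℤ × ℤ) (j : ℤ) : Prop :=
  Txj x j ∈ TC A ∨ Txj x (j - 1) ∈ TC A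

/-- Rotation by `π/2`. -/
def Jmat : Mat2 := !![0, -1; 1, 0]

/-- Midpoint continuity of a piecewise affine field: membership in `N1(𝒯)²`. -/
def midCont (ψ : Tri → E2 → E2) : Prop :=
  ∀ (x : ℤ × ℤ) (j : ℤ), ψ (Txj x j) (edgeMid x j) = ψ (Txj x (j - 1)) (edgeMid x j)

/-- `ψ` is piecewise affine with Jacobian `G T` on each triangle `T`. -/
def affWith (ψ : Tri → E2 → E2) (G : Tri → Mat2) : Prop :=
  ∀ (T : Tri) (z w : E2), ψ T z - ψ T w = mvec (G T) (z - w)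

/-- Assumption 4.1: every interface atom has exactly two interface neighbours and
at least one continuum neighbour. -/
def InterfaceOK (A : Set (ℤ × ℤ)) : Prop :=
  ∀ x ∈ interf A,
    ({j : Fin 6 | x + ed ((j : ℕ) + 1) ∈ interf A}).ncard = 2 ∧
    ∃ j : Fin 6, x + ed ((j : ℕ) + 1) ∈ contR A

/-- The patch test: local energy consistency and local force consistency for all `V ∈ 𝒱`. -/
def PatchTest (C : ℤ × ℤ → Fin 6 → Fin 6 → ℝ) (A : Set (ℤ × ℤ)) : Prop :=
  (∀ V, memV V → ∀ F : Mat2, ∀ x ∈ interf A, Vi V (C x) (Famat F) = V (Famat F)) ∧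
  (∀ V, memV V → ∀ F : Mat2, ∀ u, FinSupp u → dEac V C A (yhom F) u = 0)

/-- The closed triangle `T ⊆ ℝ²`. -/
def triSet (T : Tri) : Set E2 :=
  convexHull ℝ {emb T.1, emb (T.1 + (1, 0)), emb (T.1 + (if T.2 then ((0 : ℤ), (1 : ℤ)) else (1, -1)))}

/-- The closed edge `[x, x + a_j] ⊆ ℝ²`. -/
def edgeSeg (x : ℤ × ℤ) (j : ℤ) : Set E2 := segment ℝ (emb x) (emb (x + ed j))

/-- The atomistic region of the flat interface: `{x ∈ ℒ : x₂ < 0}`. -/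
def flatA : Set (ℤ × ℤ) := {n | emb n 1 < 0}

/-- The extended interface region `ℐ^ext = {x ∈ ℒ : dist(x, ℐ) ≤ 1}`. -/
def Iext (A : Set (ℤ × ℤ)) : Set (ℤ × ℤ) := {x | ∃ z ∈ interf A, ‖emb x - emb z‖ ≤ 1}

/-- Embedding `Fin 3 → Fin 6`. -/
def jlift (j : Fin 3) : Fin 6 := ⟨(j : ℕ), by omega⟩

end AC

/-!
Under `y_F` every stencil `Dy_F(x)` equals `F𝐚`, and each site potential reads `F𝐚` back from it:
the interface reconstruction because `a_{j-1} + a_{j+1} = a_j`, and `V^c` because it is the average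
of six reconstructions, one per triangle, each returning `F`. Hence, by the chain rule,
`∂_i V^ac_x(F𝐚) = Σ_j C_{x,j,i} ∂_j V(F𝐚)`; for `V^c` the six triangle contributions combine to the
coefficients `2/3, 1/3, 1/3` once the point symmetry `∂_{j+3} V(F𝐚) = -∂_j V(F𝐚)` is used.
Summation by parts then moves each difference `D_i u(x) = u(x + a_i) - u(x)` onto the coefficients.
-/

open scoped InnerProductSpace

section SummationByParts

variable {G ι E : Type*} [NormedAddCommGroup E] [InnerProductSpace ℝ E]

theorem hasFiniteSupport_inner_right {v : G → E} (hv : v.HasFiniteSupport) (w : G → E) :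
    (fun x => ⟪w x, v x⟫_ℝ).HasFiniteSupport :=
  hv.subset fun x hx => by
    by_contra h
    simp_all [Function.mem_support]

variable [AddCommGroup G]

theorem finsum_inner_shift_sub {u : G → E} (hu : u.HasFiniteSupport) (w : G → E) (e : G) :
    ∑ᶠ x, ⟪w x, u (x + e) - u x⟫_ℝ = ∑ᶠ x, ⟪w (x - e) - w x, u x⟫_ℝ := by
  have hu_shift : (fun x => u (x + e)).HasFiniteSupport :=
    hu.fun_comp_of_injective (add_left_injective e)
  have hreindex : ∑ᶠ x, ⟪w x, u (x + e)⟫_ℝ = ∑ᶠ x, ⟪w (x - e), u x⟫_ℝ := by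
    conv_rhs => rw [← finsum_comp_equiv (Equiv.addRight e)]
    simp
  simp only [inner_sub_left, inner_sub_right]
  rw [finsum_sub_distrib (hasFiniteSupport_inner_right hu_shift w)
      (hasFiniteSupport_inner_right hu w),
    finsum_sub_distrib (hasFiniteSupport_inner_right hu _) (hasFiniteSupport_inner_right hu w),
    hreindex]

theorem finsum_sum_inner_shift_sub [Fintype ι] {u : G → E} (hu : u.HasFiniteSupport)
    (w : ι → G → E) (e : ι → G) :
    ∑ᶠ x, ∑ i, ⟪w i x, u (x + e i) - u x⟫_ℝ = ∑ᶠ x, ⟪∑ i, (w i (x - e i) - w i x), u x⟫_ℝ := by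
  have hu_sub (i : ι) : (fun x => u (x + e i) - u x).HasFiniteSupport :=
    (hu.fun_comp_of_injective (add_left_injective (e i))).sub hu
  simp only [sum_inner]
  rw [finsum_sum_comm _ _ fun i _ => hasFiniteSupport_inner_right (hu_sub i) (w i),
    ← sum_finsum_comm _ _ fun i _ => hasFiniteSupport_inner_right hu _]
  exact Finset.sum_congr rfl fun i _ => finsum_inner_shift_sub hu (w i) (e i)

end SummationByParts

namespace AC

lemma avec_add_two (J : ℤ) : avec (J + 2) = avec (J + 1) - avec J := by
  have h3 : Real.cos (π / 3) = 1 / 2 := Real.cos_pi_div_three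
  have hs : Real.sqrt 3 ^ 2 = 3 := Real.sq_sqrt (by norm_num)
  set θ := ((J : ℝ) - 1) * (π / 3)
  have h1 : ((J + 1 : ℤ) - 1 : ℝ) * (π / 3) = θ + π / 3 := by push_cast; ring
  have h2 : ((J + 2 : ℤ) - 1 : ℝ) * (π / 3) = θ + π / 3 + π / 3 := by push_cast; ring
  ext k
  fin_cases k
  · simp only [avec, toE2, h1, h2, Fin.zero_eta, PiLp.sub_apply]
    simp [Real.cos_add, Real.sin_add, h3, Real.sin_pi_div_three]
    linear_combination (-Real.cos θ / 4) * hs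
  · simp only [avec, toE2, h1, h2, Fin.mk_one, PiLp.sub_apply]
    simp [Real.cos_add, Real.sin_add, h3, Real.sin_pi_div_three]
    linear_combination (-Real.sin θ / 4) * hs

lemma avec_add_three (J : ℤ) : avec (J + 3) = -avec J := by
  rw [show J + 3 = J + 1 + 2 by ring, avec_add_two, show J + 1 + 1 = J + 2 by ring,
    avec_add_two]
  abel

lemma avec_periodic : Function.Periodic avec 6 := fun J => by
  rw [show J + 6 = J + 3 + 3 by ring, avec_add_three, avec_add_three, neg_neg]

lemma aFam_eq_avec {j : Fin 6} {J : ℤ} (h : J ≡ (j : ℕ) + 1 [ZMOD 6]) : aFam j = avec J := by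
  obtain ⟨q, hq⟩ := h.dvd
  rw [aFam, show ((j : ℕ) : ℤ) + 1 = J + q * 6 by linarith]
  exact avec_periodic.int_mul q J

lemma mvec_eq_toEuclideanLin (F : Mat2) (v : E2) : mvec F v = Matrix.toEuclideanLin F v := rfl

lemma Famat_eq_mvec_avec (F : Mat2) {j : Fin 6} {J : ℤ} (h : J ≡ (j : ℕ) + 1 [ZMOD 6]) :
    Famat F j = mvec F (avec J) := by
  rw [Famat, aFam_eq_avec h]

lemma Famat_antiperiodic (F : Mat2) : Function.Antiperiodic (Famat F) 3 := fun j => by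
  rw [Famat_eq_mvec_avec F (J := (j : ℕ) + 1 + 3) (by simp only [Int.ModEq, Fin.val_add]; omega),
    avec_add_three, mvec_eq_toEuclideanLin, map_neg]
  rfl

lemma Famat_sub_one_add_Famat_add_one (F : Mat2) (j : Fin 6) :
    Famat F (j - 1) + Famat F (j + 1) = Famat F j := by
  rw [Famat_eq_mvec_avec F (J := (j : ℕ)) (by simp only [Int.ModEq, Fin.val_sub]; omega),
    Famat_eq_mvec_avec F (J := (j : ℕ) + 2) (by simp only [Int.ModEq, Fin.val_add]; omega),
    avec_add_two]
  simp only [mvec_eq_toEuclideanLin, ← map_add, add_sub_cancel]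
  rfl

lemma emb_add (n m : ℤ × ℤ) : emb (n + m) = emb n + emb m := by
  simp only [emb, Prod.fst_add, Prod.snd_add, Int.cast_add]
  module

lemma emb_ed (i : Fin 6) : emb (ed ((i : ℕ) + 1)) = aFam i := by
  have h3 : avec 3 = avec 2 - avec 1 := avec_add_two 1
  have h4 : avec 4 = -avec 1 := avec_add_three 1
  have h5 : avec 5 = -avec 2 := avec_add_three 2
  have h6 : avec 6 = -avec 3 := avec_add_three 3
  fin_cases i <;> simp [emb, ed, aFam, h4, h5, h6, h3] <;> abel

lemma Dfam_yhom (F : Mat2) (n : ℤ × ℤ) : Dfam (yhom F) n = Famat F := by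
  funext i
  simp only [Dfam, Dd, yhom, Famat, emb_add, emb_ed, mvec_eq_toEuclideanLin, map_add,
    add_sub_cancel_left]

lemma avec_cross (p q : ℤ) :
    avec p 0 * avec q 1 - avec p 1 * avec q 0 = Real.sin ((q - p : ℤ) * (π / 3)) := by
  rw [show ((q - p : ℤ) : ℝ) * (π / 3) = ((q : ℝ) - 1) * (π / 3) - ((p : ℝ) - 1) * (π / 3) by
    push_cast; ring, Real.sin_sub]
  simp only [avec, toE2]
  simp
  ring

lemma sin_pi_div_three_ne_zero : Real.sin (π / 3) ≠ 0 := by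
  rw [Real.sin_pi_div_three]
  positivity

lemma avec_cross_add_one (J : ℤ) :
    avec J 0 * avec (J + 1) 1 - avec J 1 * avec (J + 1) 0 = Real.sin (π / 3) := by
  rw [avec_cross, add_sub_cancel_left, Int.cast_one, one_mul]

/-- Cramer coefficients: `a_m = coef (J + 1 - m) • a_J + coef (m - J) • a_{J+1}`. -/
def coef (d : ℤ) : ℝ := Real.sin (d * (π / 3)) / Real.sin (π / 3)

lemma coef_neg (d : ℤ) : coef (-d) = -coef d := by
  simp [coef, neg_div]

lemma coef_add_three (d : ℤ) : coef (d + 3) = -coef d := by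
  rw [coef, coef, show ((d + 3 : ℤ) : ℝ) * (π / 3) = d * (π / 3) + π by push_cast; ring,
    Real.sin_add_pi, neg_div]

lemma coef_zero : coef 0 = 0 := by simp [coef]

lemma coef_one : coef 1 = 1 := by simp [coef]

lemma coef_two : coef 2 = 1 := by
  rw [coef, show ((2 : ℤ) : ℝ) * (π / 3) = π - π / 3 by push_cast; ring, Real.sin_pi_sub,
    div_self sin_pi_div_three_ne_zero]

lemma coef_three : coef 3 = 0 := by rw [← zero_add 3, coef_add_three, coef_zero, neg_zero]
lemma coef_four : coef 4 = -1 := by rw [show (4 : ℤ) = 1 + 3 by rfl, coef_add_three, coef_one]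
lemma coef_five : coef 5 = -1 := by rw [show (5 : ℤ) = 2 + 3 by rfl, coef_add_three, coef_two]
lemma coef_six : coef 6 = 0 := by
  rw [show (6 : ℤ) = 3 + 3 by rfl, coef_add_three, coef_three, neg_zero]

lemma solve2_mvec (b1 b2 : E2) (F : Mat2) (hd : b1 0 * b2 1 - b1 1 * b2 0 ≠ 0) :
    solve2 b1 b2 (mvec F b1) (mvec F b2) = F := by
  funext i k
  fin_cases k <;> simp [solve2, mvec, toE2, Fin.sum_univ_two, div_eq_iff hd] <;> ring

lemma mvec_solve2_avec (J m : ℤ) (v1 v2 : E2) :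
    mvec (solve2 (avec J) (avec (J + 1)) v1 v2) (avec m)
      = coef (J + 1 - m) • v1 + coef (m - J) • v2 := by
  have h1 := avec_cross m (J + 1)
  have h2 := avec_cross J m
  have hd := avec_cross_add_one J
  ext l
  simp only [mvec, solve2, toE2, coef, Fin.sum_univ_two, PiLp.add_apply, PiLp.smul_apply,
    smul_eq_mul, ← h1, ← h2, ← hd]
  simp
  field_simp
  ring

lemma Famat_solve2 (T : Fin 6) (v1 v2 : E2) (m : Fin 6) :
    Famat (solve2 (avec ((T : ℕ) + 1)) (avec ((T : ℕ) + 2)) v1 v2) m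
      = coef ((T : ℕ) - (m : ℕ) + 1) • v1 + coef ((m : ℕ) - (T : ℕ)) • v2 := by
  rw [Famat, aFam, show ((T : ℕ) + 2 : ℤ) = (T : ℕ) + 1 + 1 by ring, mvec_solve2_avec]
  congr 3 <;> ring

lemma solve2_Famat (F : Mat2) (T : Fin 6) :
    solve2 (avec ((T : ℕ) + 1)) (avec ((T : ℕ) + 2)) (Famat F T) (Famat F (T + 1)) = F := by
  rw [Famat_eq_mvec_avec F (j := T + 1) (J := (T : ℕ) + 1 + 1)
      (by simp only [Int.ModEq, Fin.val_add]; omega),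
    Famat, aFam, show ((T : ℕ) + 2 : ℤ) = (T : ℕ) + 1 + 1 by ring]
  exact solve2_mvec _ _ F (by rw [avec_cross_add_one]; exact sin_pi_div_three_ne_zero)

section PartialDerivatives

variable {V : (Fin 6 → E2) → ℝ}

lemma pd_apply (j : Fin 6) (g : Fin 6 → E2) (k : Fin 2) :
    pd V j g k = lineDeriv ℝ V g (unitv j k) := rfl

lemma pd_apply_eq_fderiv {g : Fin 6 → E2} (hV : DifferentiableAt ℝ V g) (j : Fin 6) (k : Fin 2) :
    pd V j g k = fderiv ℝ V g (unitv j k) :=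
  hV.lineDeriv_eq_fderiv

lemma sum_smul_unitv (M : Fin 6 → Fin 6 → ℝ) (i : Fin 6) (k : Fin 2) :
    (fun j => ∑ i', M j i' • unitv i k i') = ∑ j, M j i • unitv j k := by
  funext m
  simp [unitv, Finset.sum_apply]

lemma lineDeriv_Vi (M : Fin 6 → Fin 6 → ℝ) (g v : Fin 6 → E2) :
    lineDeriv ℝ (Vi V M) g v
      = lineDeriv ℝ V (fun j => ∑ i, M j i • g i) (fun j => ∑ i, M j i • v i) := by
  unfold lineDeriv Vi
  congr! with t j
  simp only [Pi.add_apply, Pi.smul_apply, Finset.smul_sum, smul_add, ← Finset.sum_add_distrib,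
    smul_comm t]

lemma pd_Vi (hV : Differentiable ℝ V) (M : Fin 6 → Fin 6 → ℝ) (g : Fin 6 → E2) (i : Fin 6) :
    pd (Vi V M) i g = ∑ j, M j i • pd V j (fun j => ∑ i, M j i • g i) := by
  ext k
  rw [pd_apply, lineDeriv_Vi, sum_smul_unitv, (hV _).lineDeriv_eq_fderiv, map_sum]
  simp [pd_apply_eq_fderiv (hV _)]

lemma pd_const_mul_sum {ι : Type*} (s : Finset ι) (c : ℝ) (f : ι → (Fin 6 → E2) → ℝ)
    {g : Fin 6 → E2} (hf : ∀ T ∈ s, DifferentiableAt ℝ (f T) g) (j : Fin 6) :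
    pd (fun g => c * ∑ T ∈ s, f T g) j g = c • ∑ T ∈ s, pd (f T) j g := by
  have hsum : DifferentiableAt ℝ (fun g => ∑ T ∈ s, f T g) g := DifferentiableAt.fun_sum hf
  ext k
  rw [pd_apply_eq_fderiv (hsum.const_mul c), fderiv_const_mul hsum,
    fderiv_fun_sum hf, PiLp.smul_apply, WithLp.ofLp_sum, Finset.sum_apply,
    Finset.sum_congr rfl fun T hT => pd_apply_eq_fderiv (hf T hT) j k]
  simp

lemma pd_antiperiodic (hV : ∀ g, V (fun j => -g (j + 3)) = V g) {g : Fin 6 → E2}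
    (hg : Function.Antiperiodic g 3) : Function.Antiperiodic (fun j => pd V j g) 3 := by
  intro j
  ext k
  have hline : (fun t : ℝ => V (g + t • unitv (j + 3) k))
      = fun t : ℝ => V (g + t • -unitv j k) := by
    funext t
    rw [← hV]
    congr 1
    funext m
    have hm : unitv (j + 3) k (m + 3) = unitv j k m := by
      simp only [unitv, add_left_inj]
    simp [hg m, hm]
    abel
  simp only [pd_apply, PiLp.neg_apply]
  rw [← lineDeriv_neg]
  exact congrArg (deriv · 0) hline

end PartialDerivatives

lemma sum_smul_of_oneSided {E : Type*} [AddCommGroup E] [Module ℝ E]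
    {Cp : Fin 6 → Fin 6 → ℝ} (hs : oneSided Cp) (he : eCons Cp) (g : Fin 6 → E) (j : Fin 6) :
    ∑ i, Cp j i • g i = Cp j j • g j + (1 - Cp j j) • (g (j - 1) + g (j + 1)) := by
  rw [← Finset.sum_subset (Finset.subset_univ {j - 1, j, j + 1}) fun i _ hi => by
      simp only [Finset.mem_insert, Finset.mem_singleton, not_or] at hi
      rw [hs j i hi.1 hi.2.1 hi.2.2, zero_smul],
    Finset.sum_insert (by fin_cases j <;> decide), Finset.sum_pair (by fin_cases j <;> decide),
    (he j).1, (he j).2]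
  module

lemma sum_smul_Famat_of_oneSided {Cp : Fin 6 → Fin 6 → ℝ} (hs : oneSided Cp) (he : eCons Cp)
    (F : Mat2) :
    (fun j => ∑ i, Cp j i • Famat F i) = Famat F := by
  funext j
  rw [sum_smul_of_oneSided hs he, Famat_sub_one_add_Famat_add_one]
  module

lemma sum_atomC_smul {E : Type*} [AddCommGroup E] [Module ℝ E] (p : Fin 6 → E) (i : Fin 6) :
    ∑ j, atomC j i • p j = p i := by
  simp [atomC]

/-- `triCoeff T m i` is the coefficient of `g i` in `F a_{m+1}`, where `F` is the gradient on the
triangle spanned by `a_{T+1}, a_{T+2}`, i.e. `F a_{T+1} = g T` and `F a_{T+2} = g (T + 1)`. -/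
def triCoeff (T : Fin 6) : Fin 6 → Fin 6 → ℝ := fun m i =>
  (if i = T then coef ((T : ℕ) - (m : ℕ) + 1) else 0)
    + (if i = T + 1 then coef ((m : ℕ) - (T : ℕ)) else 0)

lemma sum_triCoeff_smul (T : Fin 6) (g : Fin 6 → E2) :
    (fun m => ∑ i, triCoeff T m i • g i)
      = Famat (solve2 (avec ((T : ℕ) + 1)) (avec ((T : ℕ) + 2)) (g T) (g (T + 1))) := by
  funext m
  simp [triCoeff, Famat_solve2, add_smul, Finset.sum_add_distrib, ite_smul]

lemma Vc_eq_sum_Vi (V : (Fin 6 → E2) → ℝ) :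
    Vc V = fun g => 6⁻¹ * ∑ T, Vi V (triCoeff T) g := by
  funext g
  have hΩ : Om0 ≠ 0 := by unfold Om0; positivity
  simp only [Vc, Wf, Vi, sum_triCoeff_smul, ← Finset.sum_div]
  field_simp

/- The coefficient of `p m` on the left is `cos ((m - i) π / 3) / 3`. -/
lemma smul_sum_triCoeff_of_antiperiodic {E : Type*} [AddCommGroup E] [Module ℝ E] {p : Fin 6 → E}
    (hp : Function.Antiperiodic p 3) (i : Fin 6) :
    (6 : ℝ)⁻¹ • ∑ T, ∑ m, triCoeff T m i • p m = ∑ m, cbC m i • p m := by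
  have h3 : p 3 = -p 0 := hp 0
  have h4 : p 4 = -p 1 := hp 1
  have h5 : p 5 = -p 2 := hp 2
  fin_cases i <;>
    simp [Fin.sum_univ_six, triCoeff, cbC, coef_neg, coef_zero, coef_one, coef_two, coef_three,
      coef_four, coef_five, coef_six, h3, h4, h5, show (-1 : Fin 6) = 5 from rfl] <;>
    module

lemma pd_Vc_Famat {V : (Fin 6 → E2) → ℝ} (hV : memV V) (F : Mat2) (i : Fin 6) :
    pd (Vc V) i (Famat F) = ∑ m, cbC m i • pd V m (Famat F) := by
  have hVd : Differentiable ℝ V := hV.1.differentiable (by norm_num)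
  have hVi (T : Fin 6) : Differentiable ℝ (Vi V (triCoeff T)) := hVd.comp (by fun_prop)
  rw [Vc_eq_sum_Vi, pd_const_mul_sum _ _ _ fun T _ => (hVi T).differentiableAt]
  simp only [pd_Vi hVd, sum_triCoeff_smul, solve2_Famat]
  exact smul_sum_triCoeff_of_antiperiodic (pd_antiperiodic hV.2 (Famat_antiperiodic F)) i

lemma pd_Vac_Famat {A : Set (ℤ × ℤ)} {C : ℤ × ℤ → Fin 6 → Fin 6 → ℝ}
    (hI : ∀ x ∈ interf A, oneSided (C x) ∧ eCons (C x)) (hA : ∀ x ∈ A, C x = atomC)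
    (hC : ∀ x ∈ contR A, C x = cbC) {V : (Fin 6 → E2) → ℝ} (hV : memV V) (F : Mat2)
    (n : ℤ × ℤ) (i : Fin 6) :
    pd (Vac V C A n) i (Famat F) = ∑ j, C n j i • pd V j (Famat F) := by
  by_cases hnA : n ∈ A
  · rw [Vac, if_pos hnA, hA n hnA, sum_atomC_smul fun j => pd V j (Famat F)]
  by_cases hnI : n ∈ interf A
  · rw [Vac, if_neg hnA, if_pos hnI, pd_Vi (hV.1.differentiable (by norm_num)),
      sum_smul_Famat_of_oneSided (hI n hnI).1 (hI n hnI).2]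
  · rw [Vac, if_neg hnA, if_neg hnI, hC n ⟨hnA, hnI⟩, pd_Vc_Famat hV]

lemma dotE_eq_inner (v w : E2) : dotE v w = ⟪v, w⟫_ℝ := by
  simp [dotE, PiLp.inner_apply, mul_comm]

lemma forceSum_eq (C : ℤ × ℤ → Fin 6 → Fin 6 → ℝ) (V : (Fin 6 → E2) → ℝ) (F : Mat2)
    (x : ℤ × ℤ) :
    forceSum C V F x = ∑ i : Fin 6, (∑ j, C (x - ed ((i : ℕ) + 1)) j i • pd V j (Famat F)
      - ∑ j, C x j i • pd V j (Famat F)) := by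
  simp only [forceSum, sub_smul, Finset.sum_sub_distrib]
  congr 1 <;> exact Finset.sum_comm

end AC
open AC in
/-- the forces of the a/c energy under homogeneous deformations (Lemma 3.2). -/
theorem force_formula_homogeneous
    (A : Set (ℤ × ℤ)) (C : ℤ × ℤ → Fin 6 → Fin 6 → ℝ)
    (hI : ∀ x ∈ interf A, oneSided (C x) ∧ eCons (C x))
    (hA : ∀ x ∈ A, C x = atomC)
    (hC : ∀ x ∈ contR A, C x = cbC) :
    ∀ V : (Fin 6 → E2) → ℝ, memV V → ∀ F : Mat2, ∀ u : ℤ × ℤ → E2, FinSupp u →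
      dEac V C A (yhom F) u = ∑ᶠ x : ℤ × ℤ, dotE (forceSum C V F x) (u x) := by
  intro V hV F u hu
  have hsite (n : ℤ × ℤ) (i : Fin 6) :
      pd (Vac V C A n) i (Dfam (yhom F) n) = ∑ j, C n j i • pd V j (Famat F) := by
    rw [Dfam_yhom, pd_Vac_Famat hI hA hC hV]
  simp only [dEac, dotE_eq_inner, hsite, forceSum_eq, Dfam, Dd]
  exact finsum_sum_inner_shift_sub hu _ _
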